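/- On the disk of radius h, the stiffness matrix entry equals κ²h³ ∫₀^{2π} e^{iκh(d_m−d_ℓ)·(cos t, sin t)} cos(t − θ_m) cos(t − θ_ℓ) dt = πκ²h³ [J₀(κh a(m−ℓ)) cos(2π(m−ℓ)/p) + J₂(κh a(m−ℓ))], where a(n) = 2 sin(πn/p). -/
import Mathlib
open Real Complex intervalIntegral

noncomputable def besselJ (q : ℤ) (y : ℝ) : ℂ :=
  (1 / (2 * π)) * ∫ s in (0:ℝ)..(2 * π),
    Complex.exp (Complex.I * y * Real.sin s - Complex.I * q * s)

lemma aux_J0 (y : ℝ) :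
    (∫ s in (0:ℝ)..(2 * π), Complex.exp (Complex.I * y * Real.sin s))
      = 2 * π * besselJ 0 y := by
  have hπ : (π : ℂ) ≠ 0 := by exact_mod_cast Real.pi_ne_zero
  unfold besselJ
  simp only [Int.cast_zero, mul_zero, zero_mul, sub_zero]
  rw [← mul_assoc]
  field_simp

lemma aux_sin_zero (y : ℝ) :
    (∫ s in (0:ℝ)..(2 * π),
      Complex.exp (Complex.I * y * Real.sin s) * Real.sin (2 * s)) = 0 := by
  set F : ℝ → ℂ := fun s => Complex.exp (Complex.I * y * Real.sin s) * Real.sin (2 * s) with hF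
  have hper : Function.Periodic F (2 * π) := by
    intro x
    have h1 : Real.sin (x + 2 * π) = Real.sin x := Real.sin_add_two_pi x
    have h2 : Real.sin (2 * (x + 2 * π)) = Real.sin (2 * x) := by
      have : 2 * (x + 2 * π) = 2 * x + 2 * π + 2 * π := by ring
      rw [this, Real.sin_add_two_pi, Real.sin_add_two_pi]
    simp only [hF]
    rw [h1, h2]
  have h1 : (∫ s in (0:ℝ)..(2 * π), F s) = ∫ s in (-π)..π, F s := by
    have := hper.intervalIntegral_add_eq 0 (-π)
    rw [zero_add, show -π + 2 * π = π by ring] at this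
    exact this
  have h3 : ∀ t : ℝ, F (π - t) = -F t := by
    intro t
    have hs : Real.sin (π - t) = Real.sin t := Real.sin_pi_sub t
    have hs2 : Real.sin (2 * (π - t)) = -Real.sin (2 * t) := by
      have : 2 * (π - t) = -(2 * t) + 2 * π := by ring
      rw [this, Real.sin_add_two_pi, Real.sin_neg]
    simp only [hF]
    rw [hs, hs2]
    push_cast
    ring
  have h2 : (∫ t in (0:ℝ)..(2 * π), F (π - t)) = ∫ s in (-π)..π, F s := by
    have := intervalIntegral.integral_comp_sub_left (a := (0:ℝ)) (b := 2 * π) F π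
    rw [show π - 2 * π = -π by ring, sub_zero] at this
    exact this
  have h4 : (∫ t in (0:ℝ)..(2 * π), F (π - t)) = -∫ t in (0:ℝ)..(2 * π), F t := by
    simp_rw [h3]
    exact intervalIntegral.integral_neg
  have h5 : (∫ s in (0:ℝ)..(2 * π), F s) = -∫ s in (0:ℝ)..(2 * π), F s :=
    h1.trans (h2.symm.trans h4)
  linear_combination h5 / 2

lemma aux_J2 (y : ℝ) :
    (∫ s in (0:ℝ)..(2 * π),
      Complex.exp (Complex.I * y * Real.sin s) * Real.cos (2 * s))
      = 2 * π * besselJ 2 y := by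
  have hπ : (π : ℂ) ≠ 0 := by exact_mod_cast Real.pi_ne_zero
  have key : ∀ s : ℝ, Complex.exp (Complex.I * y * Real.sin s - Complex.I * ((2:ℤ):ℂ) * s)
      = Complex.exp (Complex.I * y * Real.sin s) * Real.cos (2 * s)
        - (Complex.exp (Complex.I * y * Real.sin s) * Real.sin (2 * s)) * Complex.I := by
    intro s
    rw [sub_eq_add_neg, Complex.exp_add]
    have h2 : -(Complex.I * ((2:ℤ):ℂ) * s) = ((-(2*s) : ℝ) : ℂ) * Complex.I := by
      push_cast; ring
    rw [h2, Complex.exp_mul_I]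
    rw [← Complex.ofReal_cos, ← Complex.ofReal_sin, Real.cos_neg, Real.sin_neg]
    push_cast
    ring
  have hint1 : IntervalIntegrable
      (fun s : ℝ => Complex.exp (Complex.I * y * Real.sin s) * Real.cos (2 * s))
      MeasureTheory.volume 0 (2 * π) := by
    apply Continuous.intervalIntegrable; fun_prop
  have hint2 : IntervalIntegrable
      (fun s : ℝ => (Complex.exp (Complex.I * y * Real.sin s) * Real.sin (2 * s)) * Complex.I)
      MeasureTheory.volume 0 (2 * π) := by
    apply Continuous.intervalIntegrable; fun_prop
  unfold besselJ
  rw [← mul_assoc, show (2:ℂ) * π * (1/(2*π)) = 1 by field_simp, one_mul]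
  rw [intervalIntegral.integral_congr (g := fun s : ℝ =>
      Complex.exp (Complex.I * y * Real.sin s) * Real.cos (2 * s)
        - (Complex.exp (Complex.I * y * Real.sin s) * Real.sin (2 * s)) * Complex.I)
      (fun s _ => key s)]
  rw [intervalIntegral.integral_sub hint1 hint2, intervalIntegral.integral_mul_const,
    aux_sin_zero, zero_mul, sub_zero]

/-- On the disk of radius h, the stiffness matrix entry equals
πκ²h³ [J₀(κh a(m−ℓ)) cos(2π(m−ℓ)/p) + J₂(κh a(m−ℓ))], with a(n) = 2 sin(πn/p). -/
theorem stmt16 (κ h : ℝ) (hκ : 0 < κ) (hh : 0 < h) (p : ℕ) (hp : 1 ≤ p)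
    (m ℓ : ℤ) (θ : ℤ → ℝ) (hθ : ∀ k, θ k = 2 * π * k / p)
    (a : ℤ → ℝ) (ha : ∀ n : ℤ, a n = 2 * Real.sin (π * n / p)) :
    (κ : ℂ) ^ 2 * h ^ 3 *
      (∫ t in (0:ℝ)..(2 * π),
        Complex.exp (Complex.I * κ * h *
          ((Real.cos (θ m) - Real.cos (θ ℓ)) * Real.cos t +
           (Real.sin (θ m) - Real.sin (θ ℓ)) * Real.sin t)) *
          Real.cos (t - θ m) * Real.cos (t - θ ℓ)) =
    π * κ ^ 2 * h ^ 3 *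
      (besselJ 0 (κ * h * a (m - ℓ)) * Real.cos (2 * π * (m - ℓ) / p) +
       besselJ 2 (κ * h * a (m - ℓ))) := by
  have hp0 : (p : ℝ) ≠ 0 := Nat.cast_ne_zero.mpr (by omega)
  set β : ℝ := π * ((m : ℝ) + (ℓ : ℝ)) / p with hβ
  set δ : ℝ := π * ((m : ℝ) - (ℓ : ℝ)) / p with hδ
  set y : ℝ := κ * h * a (m - ℓ) with hy
  have hθm : θ m = β + δ := by rw [hθ, hβ, hδ]; field_simp; ring
  have hθl : θ ℓ = β - δ := by rw [hθ, hβ, hδ]; field_simp; ring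
  have hya : y = κ * h * (2 * Real.sin δ) := by
    rw [hy, ha, hδ]; push_cast; ring_nf
  set g : ℝ → ℂ := fun s => Complex.exp (Complex.I * y * Real.sin s) *
      ((1/2 * Real.cos (2 * s) + 1/2 * Real.cos (2 * δ) : ℝ) : ℂ) with hg
  have hpt : ∀ t : ℝ,
      Complex.exp (Complex.I * κ * h *
          ((Real.cos (θ m) - Real.cos (θ ℓ)) * Real.cos t +
           (Real.sin (θ m) - Real.sin (θ ℓ)) * Real.sin t)) *
          Real.cos (t - θ m) * Real.cos (t - θ ℓ) = g (t - β) := by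
    intro t
    have harg : κ * h * ((Real.cos (θ m) - Real.cos (θ ℓ)) * Real.cos t +
        (Real.sin (θ m) - Real.sin (θ ℓ)) * Real.sin t) = y * Real.sin (t - β) := by
      rw [hθm, hθl, hya]
      simp only [Real.cos_add, Real.cos_sub, Real.sin_add, Real.sin_sub]
      ring
    have hprod : Real.cos (t - θ m) * Real.cos (t - θ ℓ)
        = 1/2 * Real.cos (2 * (t - β)) + 1/2 * Real.cos (2 * δ) := by
      have e1 : t - θ m = (t - β) - δ := by rw [hθm]; ring
      have e2 : t - θ ℓ = (t - β) + δ := by rw [hθl]; ring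
      rw [e1, e2, Real.cos_sub, Real.cos_add, Real.cos_two_mul, Real.cos_two_mul]
      have h1 := Real.sin_sq_add_cos_sq (t - β)
      have h2 := Real.sin_sq_add_cos_sq δ
      nlinarith [h1, h2]
    have hc : Complex.I * (κ : ℂ) * (h : ℂ) *
        (((Real.cos (θ m) : ℂ) - (Real.cos (θ ℓ) : ℂ)) * (Real.cos t : ℂ) +
         ((Real.sin (θ m) : ℂ) - (Real.sin (θ ℓ) : ℂ)) * (Real.sin t : ℂ))
        = Complex.I * (y : ℂ) * (Real.sin (t - β) : ℂ) := by
      have := congrArg (fun r : ℝ => Complex.I * (r : ℂ)) harg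
      push_cast at this ⊢
      linear_combination this
    simp only [hg]
    rw [hc, mul_assoc]
    congr 1
    exact_mod_cast hprod
  have hIcongr : (∫ t in (0:ℝ)..(2 * π),
      Complex.exp (Complex.I * κ * h *
          ((Real.cos (θ m) - Real.cos (θ ℓ)) * Real.cos t +
           (Real.sin (θ m) - Real.sin (θ ℓ)) * Real.sin t)) *
          Real.cos (t - θ m) * Real.cos (t - θ ℓ))
      = ∫ t in (0:ℝ)..(2 * π), g (t - β) :=
    intervalIntegral.integral_congr (fun t _ => hpt t)
  have hper : Function.Periodic g (2 * π) := by
    intro x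
    have h1 : Real.sin (x + 2 * π) = Real.sin x := Real.sin_add_two_pi x
    have h2 : Real.cos (2 * (x + 2 * π)) = Real.cos (2 * x) := by
      have : 2 * (x + 2 * π) = 2 * x + 2 * π + 2 * π := by ring
      rw [this, Real.cos_add_two_pi, Real.cos_add_two_pi]
    simp only [hg]
    rw [h1, h2]
  have hshift : (∫ t in (0:ℝ)..(2 * π), g (t - β)) = ∫ s in (0:ℝ)..(2 * π), g s := by
    rw [intervalIntegral.integral_comp_sub_right g β]
    have := hper.intervalIntegral_add_eq (0 - β) 0
    rw [zero_add, show 0 - β + 2 * π = 2 * π - β by ring] at this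
    exact this
  have hint1 : IntervalIntegrable
      (fun s : ℝ => (1/2 : ℂ) * (Complex.exp (Complex.I * y * Real.sin s) * Real.cos (2 * s)))
      MeasureTheory.volume 0 (2 * π) := by
    apply Continuous.intervalIntegrable; fun_prop
  have hint2 : IntervalIntegrable
      (fun s : ℝ => ((1/2 : ℂ) * Real.cos (2 * δ)) * Complex.exp (Complex.I * y * Real.sin s))
      MeasureTheory.volume 0 (2 * π) := by
    apply Continuous.intervalIntegrable; fun_prop
  have hsplit : (∫ s in (0:ℝ)..(2 * π), g s)
      = (1/2 : ℂ) * (∫ s in (0:ℝ)..(2 * π),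
          Complex.exp (Complex.I * y * Real.sin s) * Real.cos (2 * s))
        + ((1/2 : ℂ) * Real.cos (2 * δ)) *
          ∫ s in (0:ℝ)..(2 * π), Complex.exp (Complex.I * y * Real.sin s) := by
    rw [← intervalIntegral.integral_const_mul, ← intervalIntegral.integral_const_mul,
      ← intervalIntegral.integral_add hint1 hint2]
    apply intervalIntegral.integral_congr
    intro s _
    simp only [hg]
    push_cast
    ring
  rw [hIcongr, hshift, hsplit, aux_J2, aux_J0]
  rw [show 2 * π * ((m : ℝ) - (ℓ : ℝ)) / (p : ℝ) = 2 * δ by rw [hδ]; ring]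
  push_cast
  ring
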